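/- For a nonnegative integer n and 0 ≤ r ≤ n, the derivative at x = 0 of the function x ↦ C(n+x, r) (the generalized binomial coefficient (n+x)(n+x-1)⋯(n+x-r+1)/r!) equals C(n,r)·(H_n − H_{n−r}), where H_m = ∑_{k=1}^m 1/k is the m-th harmonic number. -/

import Mathlib

noncomputable def H (m : ℕ) : ℝ := ∑ j ∈ Finset.range m, (1 : ℝ) / (j + 1)

noncomputable def genBinom (y : ℝ) (r : ℕ) : ℝ :=
  (∏ i ∈ Finset.range r, (y - i)) / (Nat.factorial r)

/-! The numerator of `genBinom y r` is a product of the linear factors `y - i`, `i < r`, so away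
from their zeros its logarithmic derivative is `∑ i < r, 1 / (y - i)`. At `y = n ≥ r` the
coefficient is `n.choose r`, and the sum consists of the reciprocals `1 / (n - r + 1), …, 1 / n`,
i.e. `H n - H (n - r)`. -/

open Finset

theorem genBinom_natCast (n r : ℕ) : genBinom n r = n.choose r := by
  rw [genBinom, prod_range_natCast_sub, ← Nat.descFactorial_eq_prod_range,
    Nat.descFactorial_eq_factorial_mul_choose, Nat.cast_mul,
    mul_div_cancel_left₀ _ (Nat.cast_ne_zero.2 r.factorial_ne_zero)]

theorem logDeriv_genBinom {y : ℝ} (r : ℕ) (hy : ∀ i < r, y ≠ i) :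
    logDeriv (genBinom · r) y = ∑ i ∈ range r, 1 / (y - i) := by
  have hfac : (r.factorial : ℝ)⁻¹ ≠ 0 := inv_ne_zero (Nat.cast_ne_zero.2 r.factorial_ne_zero)
  simp_rw [genBinom, div_eq_mul_inv _ ((r.factorial : ℝ)), logDeriv_mul_const _ _ hfac]
  rw [logDeriv_prod (fun i hi => sub_ne_zero.2 (hy i (mem_range.1 hi))) (fun i _ => by fun_prop)]
  refine sum_congr rfl fun i _ => ?_
  simp [logDeriv_apply]

theorem deriv_genBinom {y : ℝ} (r : ℕ) (hy : ∀ i < r, y ≠ i) :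
    deriv (genBinom · r) y = genBinom y r * ∑ i ∈ range r, 1 / (y - i) := by
  have hne : genBinom y r ≠ 0 :=
    div_ne_zero (prod_ne_zero_iff.2 fun i hi => sub_ne_zero.2 (hy i (mem_range.1 hi)))
      (Nat.cast_ne_zero.2 r.factorial_ne_zero)
  rw [← logDeriv_genBinom r hy, logDeriv_apply, mul_div_cancel₀ _ hne]

theorem H_add (m k : ℕ) : H (m + k) = H m + ∑ i ∈ range k, 1 / ((m + i : ℕ) + 1 : ℝ) := by
  rw [H, H, sum_range_add]

theorem sum_range_one_div_natCast_sub {n r : ℕ} (h : r ≤ n) :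
    ∑ i ∈ range r, 1 / ((n : ℝ) - i) = H n - H (n - r) := by
  obtain ⟨m, rfl⟩ := Nat.exists_eq_add_of_le' h
  rw [Nat.add_sub_cancel, H_add, add_sub_cancel_left, ← sum_range_reflect]
  refine sum_congr rfl fun i hi => ?_
  have hi : i < r := mem_range.1 hi
  push_cast [Nat.cast_sub (Nat.le_sub_one_of_lt hi), Nat.cast_sub (Nat.one_le_of_lt hi)]
  ring_nf

theorem deriv_genBinom_add (n r : ℕ) (h : r ≤ n) :
    deriv (fun x : ℝ => genBinom ((n : ℝ) + x) r) 0 =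
      (n.choose r : ℝ) * (H n - H (n - r)) := by
  have hn : ∀ i < r, (n : ℝ) ≠ i := fun i hi => by exact_mod_cast (hi.trans_le h).ne'
  rw [deriv_comp_const_add (f := (genBinom · r)), add_zero, deriv_genBinom r hn, genBinom_natCast,
    sum_range_one_div_natCast_sub h]
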